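/- Fix m ≥ 2 and a single attacker type with payoffs 0 < I_1 < I_2 < ⋯ < I_m, and fix i with 1 ≤ i < m. Define p ∈ ℝ^m by p_i = 1 − I_i/I_{i+1}, p_j = I_i/I_j − I_i/I_{j+1} for i < j < m, p_m = I_i/I_m, and p_j = 0 for j < i. Then p is a probability vector with p_j ∈ (0,1) for all j ∈ {i+1,…,m}, and for every probability vector q ∈ ℝ^m the attacker's average payoff satisfies pᵀΥq = I_i + Σ_{j=1}^{i−1} q_j·(I_j − I_i) ≤ I_i, with equality if and only if q_j = 0 for all j < i. Consequently, every best response of the attacker to p has support contained in {i, i+1, …, m}. -/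
import Mathlib


open Matrix BigOperators

/-- A (mixed strategy) probability vector: nonnegative entries summing to one. -/
def IsProbVec {m : ℕ} (p : Fin m → ℝ) : Prop := (∀ i, 0 ≤ p i) ∧ ∑ i, p i = 1

/-- The previous index `j - 1` (mapping `0` to `0`). -/
def prevF {m : ℕ} (j : Fin m) : Fin m := ⟨(j : ℕ) - 1, lt_of_le_of_lt (Nat.sub_le _ _) j.isLt⟩

/-- Defender cost matrix for a single attacker type: `Ω_{i,j} = c_F/τ_i + 1{j ≤ i}·I_j`. -/
noncomputable def OmegaS {m : ℕ} (τ : Fin m → ℝ) (cF : ℝ) (I : Fin m → ℝ) :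
    Matrix (Fin m) (Fin m) ℝ :=
  Matrix.of fun i j => cF / τ i + if j ≤ i then I j else 0

/-- Attacker payoff matrix for a single attacker type: `Υ_{i,j} = 1{j ≤ i}·I_j`. -/
noncomputable def UpsilonS {m : ℕ} (I : Fin m → ℝ) : Matrix (Fin m) (Fin m) ℝ :=
  Matrix.of fun i j => if j ≤ i then I j else 0

/-- The closed-form attacker mixed strategy of the paper's Lemma 4 (Equation (16)):
`q_j = (c_F/I_j)(1/τ_{j-1} - 1/τ_j)` for `j > i`, `q_i = 1 - Σ_{l > i} q_l`, `q_j = 0` for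
`j < i`. -/
noncomputable def qstar {m : ℕ} (τ : Fin m → ℝ) (I : Fin m → ℝ) (cF : ℝ) (i : Fin m) :
    Fin m → ℝ := fun j =>
  if j < i then 0
  else if j = i then 1 - ∑ l ∈ Finset.Ioi i, cF / I l * (1 / τ (prevF l) - 1 / τ l)
  else cF / I j * (1 / τ (prevF j) - 1 / τ j)

/-- The closed-form defender mixed strategy of the paper's Lemma 6 (Equation (17)):
`p_i = 1 - I_i/I_{i+1}`, `p_j = I_i/I_j - I_i/I_{j+1}` for `i < j < m`, `p_m = I_i/I_m`, and
`p_j = 0` for `j < i`. -/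
noncomputable def pstar {m : ℕ} (I : Fin m → ℝ) (i : Fin m) : Fin m → ℝ := fun j =>
  if j < i then 0
  else if h : (j : ℕ) + 1 < m then
    (if j = i then 1 - I i / I ⟨(j : ℕ) + 1, h⟩ else I i / I j - I i / I ⟨(j : ℕ) + 1, h⟩)
  else I i / I j

/-- Auxiliary telescoping function: `G n = I i / I (max n i)` for `n < m`, `0` otherwise. -/
noncomputable def Gaux {m : ℕ} (I : Fin m → ℝ) (i : Fin m) (n : ℕ) : ℝ :=
  if h : n < m then I i / I ⟨max n (i : ℕ), by have := i.isLt; omega⟩ else 0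

lemma Gaux_eq {m : ℕ} (I : Fin m → ℝ) (i : Fin m) (n : ℕ) (h : n < m) :
    Gaux I i n = I i / I ⟨max n (i : ℕ), by have := i.isLt; omega⟩ := dif_pos h

lemma Gaux_zero {m : ℕ} (I : Fin m → ℝ) (i : Fin m) (n : ℕ) (h : ¬ n < m) :
    Gaux I i n = 0 := dif_neg h

lemma pstar_eq_G {m : ℕ} (I : Fin m → ℝ) (hpos : ∀ j, 0 < I j) (i j : Fin m) :
    pstar I i j = Gaux I i (j : ℕ) - Gaux I i ((j : ℕ) + 1) := by
  have him := i.isLt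
  have hjm := j.isLt
  unfold pstar
  by_cases hji : j < i
  · rw [if_pos hji]
    rw [Fin.lt_def] at hji
    rw [Gaux_eq I i _ hjm, Gaux_eq I i _ (show (j : ℕ) + 1 < m by omega)]
    have h1 : max (j : ℕ) (i : ℕ) = (i : ℕ) := by omega
    have h2 : max ((j : ℕ) + 1) (i : ℕ) = (i : ℕ) := by omega
    simp only [h1, h2, Fin.eta]
    ring
  · rw [if_neg hji]
    rw [Fin.lt_def, not_lt] at hji
    have h1 : max (j : ℕ) (i : ℕ) = (j : ℕ) := by omega
    by_cases hj1 : (j : ℕ) + 1 < m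
    · rw [dif_pos hj1, Gaux_eq I i _ hjm, Gaux_eq I i _ hj1]
      have h2 : max ((j : ℕ) + 1) (i : ℕ) = (j : ℕ) + 1 := by omega
      simp only [h1, h2, Fin.eta]
      by_cases hji' : j = i
      · rw [if_pos hji',
          ← show I i / I j = 1 from by rw [hji']; exact div_self (hpos i).ne']
      · rw [if_neg hji']
    · rw [dif_neg hj1, Gaux_eq I i _ hjm, Gaux_zero I i _ hj1]
      simp only [h1, Fin.eta]
      ring

lemma Gaux_lt {m : ℕ} (I : Fin m → ℝ) (i k : Fin m) (h : k < i) :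
    Gaux I i (k : ℕ) = I i / I i := by
  rw [Fin.lt_def] at h
  rw [Gaux, dif_pos k.isLt]
  have h1 : max (k : ℕ) (i : ℕ) = (i : ℕ) := by omega
  simp only [h1, Fin.eta]

lemma Gaux_ge {m : ℕ} (I : Fin m → ℝ) (i k : Fin m) (h : i ≤ k) :
    Gaux I i (k : ℕ) = I i / I k := by
  rw [Fin.le_def] at h
  rw [Gaux, dif_pos k.isLt]
  have h1 : max (k : ℕ) (i : ℕ) = (k : ℕ) := by omega
  simp only [h1, Fin.eta]

lemma sum_ite_pstar {m : ℕ} (I : Fin m → ℝ) (hpos : ∀ j, 0 < I j) (i k : Fin m) :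
    ∑ j : Fin m, (if k ≤ j then pstar I i j else 0) = Gaux I i (k : ℕ) := by
  have hcong : ∀ j : Fin m, (if k ≤ j then pstar I i j else 0)
      = (fun n => if (k : ℕ) ≤ n then Gaux I i n - Gaux I i (n + 1) else 0) ((j : ℕ)) := by
    intro j
    simp only [Fin.le_def]
    split_ifs with h
    · exact pstar_eq_G I hpos i j
    · rfl
  rw [Finset.sum_congr rfl (fun j _ => hcong j),
    Fin.sum_univ_eq_sum_range (fun n => if (k : ℕ) ≤ n then Gaux I i n - Gaux I i (n + 1) else 0)]
  have key : ∀ n, (if (k : ℕ) ≤ n then Gaux I i n - Gaux I i (n + 1) else 0)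
      = Gaux I i (max n (k : ℕ)) - Gaux I i (max (n + 1) (k : ℕ)) := by
    intro n
    by_cases h : (k : ℕ) ≤ n
    · rw [if_pos h, max_eq_left h, max_eq_left (by omega)]
    · rw [if_neg h, max_eq_right (by omega), max_eq_right (by omega), sub_self]
  simp only [key]
  rw [Finset.sum_range_sub' (fun n => Gaux I i (max n (k : ℕ)))]
  have h0 : max 0 (k : ℕ) = (k : ℕ) := by omega
  have hmk : max m (k : ℕ) = m := by have := k.isLt; omega
  have hGm : Gaux I i m = 0 := dif_neg (lt_irrefl m)
  rw [h0, hmk, hGm, sub_zero]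

lemma payoff_eq {m : ℕ} (I : Fin m → ℝ) (hpos : ∀ j, 0 < I j) (i : Fin m)
    (q : Fin m → ℝ) (hq : IsProbVec q) :
    pstar I i ⬝ᵥ (UpsilonS I *ᵥ q) = I i + ∑ j ∈ Finset.Iio i, q j * (I j - I i) := by
  have step1 : pstar I i ⬝ᵥ (UpsilonS I *ᵥ q)
      = ∑ k : Fin m, Gaux I i (k : ℕ) * (I k * q k) := by
    simp only [dotProduct, mulVec, UpsilonS, Matrix.of_apply, Finset.mul_sum]
    rw [Finset.sum_comm]
    refine Finset.sum_congr rfl fun k _ => ?_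
    rw [← sum_ite_pstar I hpos i k, Finset.sum_mul]
    refine Finset.sum_congr rfl fun j _ => ?_
    split_ifs <;> ring
  rw [step1]
  have rhs : I i + ∑ j ∈ Finset.Iio i, q j * (I j - I i)
      = ∑ k : Fin m, (I i * q k + if k < i then q k * (I k - I i) else 0) := by
    rw [Finset.sum_add_distrib, ← Finset.mul_sum, hq.2, mul_one]
    congr 1
    rw [← Finset.sum_filter]
    congr 1
    ext x
    simp [Finset.mem_Iio]
  rw [rhs]
  refine Finset.sum_congr rfl fun k _ => ?_
  by_cases hk : k < i
  · rw [if_pos hk, Gaux_lt I i k hk, div_self (hpos i).ne']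
    ring
  · rw [if_neg hk, Gaux_ge I i k (not_lt.mp hk), add_zero, div_mul_eq_mul_div,
      mul_comm (I k) (q k), ← mul_assoc]
    exact mul_div_cancel_right₀ _ (hpos k).ne'

/-- Lemma 6: the closed-form defender strategy `pstar` centered at `i` is a probability vector
with entries in `(0,1)` on `{i+1,…,m}`, the attacker's average payoff against it equals
`I_i + Σ_{j<i} q_j·(I_j - I_i) ≤ I_i` with equality exactly when the attacker puts no mass
below `i`; consequently every best response of the attacker has support contained in
`{i,…,m}`. -/
theorem closed_form_nash_for_defender (m : ℕ) (hm : 2 ≤ m)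
    (I : Fin m → ℝ) (hI0 : 0 < I ⟨0, by omega⟩) (hImono : StrictMono I)
    (i : Fin m) (hi : (i : ℕ) < m - 1) :
    IsProbVec (pstar I i) ∧
    (∀ j : Fin m, i < j → 0 < pstar I i j ∧ pstar I i j < 1) ∧
    (∀ q : Fin m → ℝ, IsProbVec q →
      pstar I i ⬝ᵥ (UpsilonS I *ᵥ q) = I i + ∑ j ∈ Finset.Iio i, q j * (I j - I i) ∧
      pstar I i ⬝ᵥ (UpsilonS I *ᵥ q) ≤ I i ∧
      (pstar I i ⬝ᵥ (UpsilonS I *ᵥ q) = I i ↔ ∀ j, j < i → q j = 0)) ∧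
    (∀ q : Fin m → ℝ, IsProbVec q →
      (∀ q' : Fin m → ℝ, IsProbVec q' →
        pstar I i ⬝ᵥ (UpsilonS I *ᵥ q') ≤ pstar I i ⬝ᵥ (UpsilonS I *ᵥ q)) →
      ∀ j, j < i → q j = 0) := by
  have hpos : ∀ j, 0 < I j := by
    intro j
    exact lt_of_lt_of_le hI0 (hImono.monotone (by simp [Fin.le_def]))
  -- entries on {i, i+1, …} are in (0,1); for j = i only positivity is needed below
  have hent : ∀ j : Fin m, i ≤ j → 0 < pstar I i j ∧ pstar I i j < 1 := by
    intro j hij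
    have hjm := j.isLt
    have him := i.isLt
    rw [Fin.le_def] at hij
    unfold pstar
    rw [if_neg (by rw [Fin.lt_def]; omega)]
    by_cases hj1 : (j : ℕ) + 1 < m
    · rw [dif_pos hj1]
      have hjj1 : I j < I ⟨(j : ℕ) + 1, hj1⟩ := hImono (by rw [Fin.lt_def]; simp)
      have hij1 : I i ≤ I j := hImono.monotone (by rw [Fin.le_def]; omega)
      have hd1 : 0 < I i / I ⟨(j : ℕ) + 1, hj1⟩ := div_pos (hpos i) (hpos _)
      have hd2 : I i / I ⟨(j : ℕ) + 1, hj1⟩ < I i / I j :=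
        div_lt_div_of_pos_left (hpos i) (hpos j) hjj1
      have hd3 : I i / I j ≤ 1 := (div_le_one (hpos j)).mpr hij1
      by_cases hji : j = i
      · rw [if_pos hji]
        subst hji
        constructor
        · have : I j / I ⟨(j : ℕ) + 1, hj1⟩ < 1 :=
            (div_lt_one (hpos _)).mpr hjj1
          linarith
        · linarith
      · rw [if_neg hji]
        have hij1' : I i < I j := hImono (by rw [Fin.lt_def]; omega)
        have hd3' : I i / I j < 1 := (div_lt_one (hpos j)).mpr hij1'
        constructor <;> linarith
    · rw [dif_neg hj1]
      have hji : i < j := by rw [Fin.lt_def]; omega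
      have : I i < I j := hImono hji
      exact ⟨div_pos (hpos i) (hpos j), (div_lt_one (hpos j)).mpr this⟩
  have hprob : IsProbVec (pstar I i) := by
    constructor
    · intro j
      by_cases hji : j < i
      · unfold pstar; rw [if_pos hji]
      · exact (hent j (not_lt.mp hji)).1.le
    · have h0 : (0 : ℕ) < m := by omega
      have := sum_ite_pstar I hpos i ⟨0, h0⟩
      have hiff : ∀ j : Fin m, (⟨0, h0⟩ : Fin m) ≤ j := by
        intro j; rw [Fin.le_def]; exact Nat.zero_le _
      simp only [if_pos (hiff _)] at this
      rw [this]
      rw [Gaux_eq I i _ h0]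
      have hmax : max 0 (i : ℕ) = (i : ℕ) := max_eq_right (Nat.zero_le _)
      simp only [hmax, Fin.eta]
      exact div_self (hpos i).ne'
  have hIlt : ∀ j : Fin m, j < i → I j - I i < 0 := fun j hj => sub_neg.mpr (hImono hj)
  have hmain : ∀ q : Fin m → ℝ, IsProbVec q →
      pstar I i ⬝ᵥ (UpsilonS I *ᵥ q) = I i + ∑ j ∈ Finset.Iio i, q j * (I j - I i) ∧
      pstar I i ⬝ᵥ (UpsilonS I *ᵥ q) ≤ I i ∧
      (pstar I i ⬝ᵥ (UpsilonS I *ᵥ q) = I i ↔ ∀ j, j < i → q j = 0) := by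
    intro q hq
    have heq := payoff_eq I hpos i q hq
    have hterm : ∀ j ∈ Finset.Iio i, q j * (I j - I i) ≤ 0 := by
      intro j hj
      rw [Finset.mem_Iio] at hj
      exact mul_nonpos_of_nonneg_of_nonpos (hq.1 j) (hIlt j hj).le
    have hsle : ∑ j ∈ Finset.Iio i, q j * (I j - I i) ≤ 0 := Finset.sum_nonpos hterm
    refine ⟨heq, by rw [heq]; linarith, ?_⟩
    rw [heq]
    constructor
    · intro h
      have hs0 : ∑ j ∈ Finset.Iio i, q j * (I j - I i) = 0 := by linarith
      intro j hj
      have := (Finset.sum_eq_zero_iff_of_nonpos hterm).mp hs0 j (Finset.mem_Iio.mpr hj)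
      rcases mul_eq_zero.mp this with h' | h'
      · exact h'
      · exact absurd h' (hIlt j hj).ne
    · intro h
      have : ∑ j ∈ Finset.Iio i, q j * (I j - I i) = 0 :=
        Finset.sum_eq_zero fun j hj => by rw [h j (Finset.mem_Iio.mp hj), zero_mul]
      rw [this, add_zero]
  refine ⟨hprob, fun j hij => hent j hij.le, hmain, ?_⟩
  intro q hq hbest j hj
  -- compare with the point mass at i
  have hei : IsProbVec (fun k => if k = i then (1 : ℝ) else 0) := by
    constructor
    · intro k; by_cases h : k = i <;> simp [h]
    · simp
  have hval : pstar I i ⬝ᵥ (UpsilonS I *ᵥ (fun k => if k = i then (1 : ℝ) else 0)) = I i := by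
    rw [(hmain _ hei).1]
    have : ∑ j ∈ Finset.Iio i, (if j = i then (1 : ℝ) else 0) * (I j - I i) = 0 :=
      Finset.sum_eq_zero fun k hk => by
        rw [if_neg (Finset.mem_Iio.mp hk).ne, zero_mul]
    rw [this, add_zero]
  have hge : I i ≤ pstar I i ⬝ᵥ (UpsilonS I *ᵥ q) := hval ▸ hbest _ hei
  have hle := (hmain q hq).2.1
  exact ((hmain q hq).2.2).mp (le_antisymm hle hge) j hj
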